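/- arXiv:1803.04939 — 2 statements merged into one kernel-verified Lean document; each statement's English description precedes it below -/
import Mathlib

section
/- Let v : ℝⁿ → ℝⁿ be a bounded measurable function with compact support, and let ρ_ε be a mollifier (ε > 0). Then for every x ∈ ℝⁿ the following identity holds: ((ρ_ε⋆v)(x)) ⊗ ((ρ_ε⋆v)(x)) − (ρ_ε ⋆ (v⊗v))(x) = (v(x) − (ρ_ε⋆v)(x)) ⊗ (v(x) − (ρ_ε⋆v)(x)) − ∫_{ℝⁿ} ρ_ε(y) · (v(x−y) − v(x)) ⊗ (v(x−y) − v(x)) dy. -/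
/-! Write `m y = ρ_ε(y)` and `u y = v(x - y)`, so that both convolutions are integrals against
the weight `m`, of total mass one. For any continuous bilinear `B` and `A = ∫ m • u`, expanding
`B (u - w) (u - w)` and integrating gives
`∫ m • B (u - w) (u - w) = ∫ m • B u u - B A w - B w A + B w w`,
which rearranges to `B A A - ∫ m • B u u = B (w - A) (w - A) - ∫ m • B (u - w) (u - w)`;
take `B = ⊗` and `w = v x`. -/

open MeasureTheory Metric Set Function Filter
open scoped ENNReal Topology

noncomputable section

/-- `ℝⁿ` with the Euclidean norm. -/
abbrev Eu (n : ℕ) : Type := EuclideanSpace ℝ (Fin n)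

/-- The `C^{0,α}` (Hölder) norm of `v` on a set `K`. -/
def holderNorm {E F : Type*} [NormedAddCommGroup F] [PseudoMetricSpace E]
    (α : ℝ) (K : Set E) (v : E → F) : ℝ :=
  sSup ((fun x => ‖v x‖) '' K) +
    sSup ((fun q : E × E => ‖v q.1 - v q.2‖ / dist q.1 q.2 ^ α) ''
      {q : E × E | q.1 ∈ K ∧ q.2 ∈ K ∧ q.1 ≠ q.2})

/-- Finiteness of the `C^{0,α}` norm of `v` on `K`. -/
def HolderBdd {E F : Type*} [NormedAddCommGroup F] [PseudoMetricSpace E]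
    (α : ℝ) (K : Set E) (v : E → F) : Prop :=
  BddAbove ((fun x => ‖v x‖) '' K) ∧
    BddAbove ((fun q : E × E => ‖v q.1 - v q.2‖ / dist q.1 q.2 ^ α) ''
      {q : E × E | q.1 ∈ K ∧ q.2 ∈ K ∧ q.1 ≠ q.2})

/-- The rescaled mollifier `ρ_ε(x) = ε^{-n} ρ(x/ε)`. -/
def mollify {n : ℕ} (ρ : Eu n → ℝ) (ε : ℝ) (z : Eu n) : ℝ :=
  (ε ^ n)⁻¹ * ρ (ε⁻¹ • z)

/-- `ρ` is a standard mollifier: smooth, nonnegative, radial, supported in the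
unit ball, with total integral one. -/
def IsMollifier {n : ℕ} (ρ : Eu n → ℝ) : Prop :=
  ContDiff ℝ (⊤ : ℕ∞) ρ ∧ HasCompactSupport ρ ∧ (∀ z, 0 ≤ ρ z) ∧
    Function.support ρ ⊆ ball 0 1 ∧ (∀ x y : Eu n, ‖x‖ = ‖y‖ → ρ x = ρ y) ∧
    ∫ z, ρ z = 1

/-- The tensor product `v ⊗ w`, the matrix with entries `vᵢ wⱼ`. -/
def tensor {n : ℕ} (v w : Eu n) : Fin n → Fin n → ℝ := fun i j => v i * w j

/-- Mollification `ρ_ε ⋆ g` of a vector field. -/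
def convV {n : ℕ} (ρ : Eu n → ℝ) (ε : ℝ) (g : Eu n → Eu n) (x : Eu n) : Eu n :=
  ∫ y, mollify ρ ε (x - y) • g y

/-- Mollification `ρ_ε ⋆ G` of a matrix-valued field (entrywise). -/
def convM {n : ℕ} (ρ : Eu n → ℝ) (ε : ℝ) (G : Eu n → Fin n → Fin n → ℝ) (x : Eu n) :
    Fin n → Fin n → ℝ :=
  ∫ y, mollify ρ ε (x - y) • G y

/-- The partial derivative `∂f/∂xⱼ` of a scalar function on `ℝⁿ`. -/
def pd {n : ℕ} (j : Fin n) (f : Eu n → ℝ) (x : Eu n) : ℝ :=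
  fderiv ℝ f x (EuclideanSpace.single j 1)

section Bilinear

variable {α E F : Type*} [MeasurableSpace α] {μ : Measure α}
  [NormedAddCommGroup E] [NormedSpace ℝ E] [CompleteSpace E]
  [NormedAddCommGroup F] [NormedSpace ℝ F] [CompleteSpace F]
  (B : E →L[ℝ] E →L[ℝ] F) {m : α → ℝ} {u : α → E}

theorem ContinuousLinearMap.integral_smul_apply₂_sub_sub (w : E) (hm : Integrable m μ)
    (hu : Integrable (fun y => m y • u y) μ)
    (huu : Integrable (fun y => m y • B (u y) (u y)) μ) :
    ∫ y, m y • B (u y - w) (u y - w) ∂μ =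
      ∫ y, m y • B (u y) (u y) ∂μ - B (∫ y, m y • u y ∂μ) w - B w (∫ y, m y • u y ∂μ)
        + (∫ y, m y ∂μ) • B w w := by
  have expand : ∀ y, m y • B (u y - w) (u y - w) =
      m y • B (u y) (u y) - B.flip w (m y • u y) - B w (m y • u y) + m y • B w w := by
    intro y
    simp only [map_sub, sub_apply, map_smul, flip_apply, smul_sub]
    abel
  have hBu : Integrable (fun y => B.flip w (m y • u y)) μ := (B.flip w).integrable_comp hu
  have hBu' : Integrable (fun y => B w (m y • u y)) μ := (B w).integrable_comp hu
  simp_rw [expand]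
  rw [integral_add _ (hm.smul_const _), integral_sub _ hBu', integral_sub huu hBu,
    (B.flip w).integral_comp_comm hu, (B w).integral_comp_comm hu, integral_smul_const, flip_apply]
  exacts [huu.sub hBu, (huu.sub hBu).sub hBu']

theorem ContinuousLinearMap.apply₂_integral_smul_sub_integral_smul_apply₂ (w : E)
    (hm : Integrable m μ) (hm1 : ∫ y, m y ∂μ = 1)
    (hu : Integrable (fun y => m y • u y) μ)
    (huu : Integrable (fun y => m y • B (u y) (u y)) μ) :
    B (∫ y, m y • u y ∂μ) (∫ y, m y • u y ∂μ) - ∫ y, m y • B (u y) (u y) ∂μ =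
      B (w - ∫ y, m y • u y ∂μ) (w - ∫ y, m y • u y ∂μ)
        - ∫ y, m y • B (u y - w) (u y - w) ∂μ := by
  rw [B.integral_smul_apply₂_sub_sub w hm hu huu, hm1, one_smul]
  simp only [map_sub, sub_apply]
  abel

end Bilinear

def tensorBilin (n : ℕ) : Eu n →L[ℝ] Eu n →L[ℝ] (Fin n → Fin n → ℝ) :=
  (LinearMap.mk₂ ℝ tensor
    (fun a b c => by ext i j; simp [tensor, add_mul])
    (fun r a b => by ext i j; simp [tensor, mul_assoc])
    (fun a b c => by ext i j; simp [tensor, mul_add])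
    (fun r a b => by ext i j; simp [tensor, mul_left_comm])).toContinuousBilinearMap

@[simp]
theorem tensorBilin_apply {n : ℕ} (a b : Eu n) : tensorBilin n a b = tensor a b := rfl

theorem integral_smul_comp_sub_left {G E : Type*} [AddCommGroup G] [MeasurableSpace G]
    [MeasurableAdd G] [MeasurableNeg G] [NormedAddCommGroup E] [NormedSpace ℝ E]
    (μ : Measure G) [μ.IsNegInvariant] [μ.IsAddLeftInvariant] (f : G → ℝ) (g : G → E) (x : G) :
    ∫ y, f (x - y) • g y ∂μ = ∫ y, f y • g (x - y) ∂μ := by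
  simpa only [sub_sub_cancel] using (integral_sub_left_eq_self (fun y => f y • g (x - y)) μ x)

theorem integrable_mollify {n : ℕ} {ρ : Eu n → ℝ} (hρ : Integrable ρ) {ε : ℝ} (hε : ε ≠ 0) :
    Integrable (mollify ρ ε) :=
  (hρ.comp_smul (inv_ne_zero hε)).const_mul _

theorem integral_mollify {n : ℕ} (ρ : Eu n → ℝ) {ε : ℝ} (hε : 0 < ε) :
    ∫ z, mollify ρ ε z = ∫ z, ρ z := by
  simp only [mollify]
  rw [integral_const_mul, Measure.integral_comp_inv_smul_of_nonneg volume ρ hε.le,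
    finrank_euclideanSpace_fin, smul_eq_mul, ← mul_assoc, inv_mul_cancel₀ (pow_ne_zero _ hε.ne'),
    one_mul]

theorem convV_eq_integral {n : ℕ} (ρ : Eu n → ℝ) (ε : ℝ) (g : Eu n → Eu n) (x : Eu n) :
    convV ρ ε g x = ∫ y, mollify ρ ε y • g (x - y) :=
  integral_smul_comp_sub_left volume _ g x

theorem convM_eq_integral {n : ℕ} (ρ : Eu n → ℝ) (ε : ℝ) (G : Eu n → Fin n → Fin n → ℝ)
    (x : Eu n) : convM ρ ε G x = ∫ y, mollify ρ ε y • G (x - y) :=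
  integral_smul_comp_sub_left volume _ G x

theorem mollified_tensor_identity_general
    {n : ℕ} (ρ : Eu n → ℝ) (hρ : IsMollifier ρ)
    (v : Eu n → Eu n) (hvm : Measurable v)
    (hvb : ∃ Cv : ℝ, ∀ x, ‖v x‖ ≤ Cv)
    (ε : ℝ) (hε : 0 < ε) :
    ∀ x : Eu n,
      tensor (convV ρ ε v x) (convV ρ ε v x)
        - convM ρ ε (fun y => tensor (v y) (v y)) x =
      tensor (v x - convV ρ ε v x) (v x - convV ρ ε v x)
        - ∫ y, mollify ρ ε y • tensor (v (x - y) - v x) (v (x - y) - v x) := by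
  intro x
  obtain ⟨Cv, hCv⟩ := hvb
  obtain ⟨-, -, -, -, -, hρ1⟩ := hρ
  have hm : Integrable (mollify ρ ε) := integrable_mollify (integrable_of_integral_eq_one hρ1) hε.ne'
  have hu_meas : AEStronglyMeasurable (fun y => v (x - y)) :=
    (hvm.comp (measurable_const.sub measurable_id)).aestronglyMeasurable
  have hu : Integrable (fun y => mollify ρ ε y • v (x - y)) :=
    hm.smul_bdd Cv hu_meas (ae_of_all _ fun y => hCv _)
  have huu : Integrable (fun y => mollify ρ ε y • tensorBilin n (v (x - y)) (v (x - y))) := by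
    refine hm.smul_bdd (‖tensorBilin n‖ * Cv * Cv)
      ((tensorBilin n).aestronglyMeasurable_comp₂ hu_meas hu_meas) (ae_of_all _ fun y => ?_)
    have hCv0 : 0 ≤ Cv := (norm_nonneg _).trans (hCv 0)
    calc ‖tensorBilin n (v (x - y)) (v (x - y))‖
        ≤ ‖tensorBilin n‖ * ‖v (x - y)‖ * ‖v (x - y)‖ := (tensorBilin n).le_opNorm₂ _ _
      _ ≤ ‖tensorBilin n‖ * Cv * Cv := by gcongr <;> exact hCv _
  simpa only [convV_eq_integral, convM_eq_integral, tensorBilin_apply] using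
    (tensorBilin n).apply₂_integral_smul_sub_integral_smul_apply₂ (v x) hm
      ((integral_mollify ρ hε).trans hρ1) hu huu

/-- the elementary identity (3.37): for a bounded, compactly
supported measurable vector field `v` and any `ε > 0`,
`(ρ_ε⋆v)⊗(ρ_ε⋆v) − ρ_ε⋆(v⊗v)
  = (v−ρ_ε⋆v)⊗(v−ρ_ε⋆v) − ∫ ρ_ε(y) (δ_y v ⊗ δ_y v) dy` pointwise. -/
theorem mollified_tensor_identity
    {n : ℕ} (ρ : Eu n → ℝ) (hρ : IsMollifier ρ)
    (v : Eu n → Eu n) (hvm : Measurable v)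
    (hvb : ∃ Cv : ℝ, ∀ x, ‖v x‖ ≤ Cv) (hvcs : HasCompactSupport v)
    (ε : ℝ) (hε : 0 < ε) :
    ∀ x : Eu n,
      tensor (convV ρ ε v x) (convV ρ ε v x)
        - convM ρ ε (fun y => tensor (v y) (v y)) x =
      tensor (v x - convV ρ ε v x) (v x - convV ρ ε v x)
        - ∫ y, mollify ρ ε y • tensor (v (x - y) - v x) (v (x - y) - v x) :=
  mollified_tensor_identity_general ρ hρ v hvm hvb ε hε
end
end

section
/- Let Ω̃ ⊂ ℝⁿ be a bounded open set, α ∈ (0,1], and u : cl Ω̃ → ℝⁿ with ‖u‖_{C^{0,α}(cl Ω̃)} < ∞. Let Ω₃ ⊂⊂ Ω₂ ⊂⊂ Ω₁ ⊂⊂ Ω̃ be open sets with dist(Ω₃, ℝⁿ∖Ω₂) > η, dist(Ω₂, ℝⁿ∖Ω₁) > η, dist(Ω₁, ℝⁿ∖Ω̃) > η for some η > 0, and let I₂ ∈ C_c^∞(ℝⁿ) equal 1 on Ω₂ and equal 0 outside Ω₁; write ū := I₂·u extended by 0 outside Ω̃. Then there is a constant C, depending only on I₂, ρ, n, α and η,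 such that for every ε with 0 < ε < η/2: sup_{x ∈ Ω₃} | (ρ_ε ⋆ (I₂·(u⊗u)))(x) − ((ρ_ε⋆ū)(x) ⊗ (ρ_ε⋆ū)(x)) | ≤ C · ε^{2α} · ‖u‖²_{C^{0,α}(cl Ω̃)}. -/
open MeasureTheory Metric Set Function Filter
open scoped ENNReal Topology

noncomputable section

/-! Since `I₂ = 1` on `Ω₂ ⊇ B̄(x, ε)`, at `x ∈ Ω₃` both mollifications are averages of `u` and
`u ⊗ u` against the probability density `g = ρ_ε(x - ·)`, which is supported in `B̄(x, ε)`.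
Their difference is therefore the covariance `∫ g (u - m) ⊗ (u - m)` with `m = ∫ g u`, and each
deviation `|u(y) - m|` is at most the oscillation of `u` on `B̄(x, ε)`, hence at most
`‖u‖_{C^{0,α}} (2ε)^α`. This gives `C = 2^{2α}`. -/

section Holder

variable {E F : Type*} [NormedAddCommGroup F] {α : ℝ} {K : Set E} {u : E → F}

lemma holderNorm_nonneg [PseudoMetricSpace E] (α : ℝ) (K : Set E) (u : E → F) :
    0 ≤ holderNorm α K u := by
  apply add_nonneg <;> apply Real.sSup_nonneg
  · rintro _ ⟨_, -, rfl⟩; positivity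
  · rintro _ ⟨_, -, rfl⟩; positivity

variable [MetricSpace E]

lemma HolderBdd.norm_sub_le (hα : 0 < α) (hu : HolderBdd α K u) {a b : E} (ha : a ∈ K)
    (hb : b ∈ K) : ‖u a - u b‖ ≤ holderNorm α K u * dist a b ^ α := by
  rcases eq_or_ne a b with rfl | hab
  · simp [Real.zero_rpow hα.ne']
  have hdα : 0 < dist a b ^ α := Real.rpow_pos_of_pos (dist_pos.2 hab) α
  have hquot : ‖u a - u b‖ / dist a b ^ α ≤ holderNorm α K u :=
    (le_csSup hu.2 ⟨(a, b), ⟨ha, hb, hab⟩, rfl⟩).trans <| le_add_of_nonneg_left <|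
      Real.sSup_nonneg (by rintro _ ⟨_, -, rfl⟩; positivity)
  rwa [div_le_iff₀ hdα] at hquot

lemma HolderBdd.norm_sub_le_of_mem_closedBall (hα : 0 < α) (hu : HolderBdd α K u) {x : E}
    {r : ℝ} (hxr : closedBall x r ⊆ K) {y z : E} (hy : y ∈ closedBall x r)
    (hz : z ∈ closedBall x r) : ‖u y - u z‖ ≤ holderNorm α K u * (2 * r) ^ α := by
  have hyz : dist y z ≤ 2 * r := (dist_triangle_right y z x).trans <| by
    linarith [mem_closedBall.1 hy, mem_closedBall.1 hz]
  exact (hu.norm_sub_le hα (hxr hy) (hxr hz)).trans <| mul_le_mul_of_nonneg_left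
    (Real.rpow_le_rpow dist_nonneg hyz hα.le) (holderNorm_nonneg α K u)

lemma HolderBdd.holderOnWith (hα : 0 < α) (hu : HolderBdd α K u) :
    HolderOnWith (holderNorm α K u).toNNReal α.toNNReal u K := by
  intro a ha b hb
  rw [edist_dist, edist_dist, Real.coe_toNNReal _ hα.le,
    ENNReal.ofReal_rpow_of_nonneg dist_nonneg hα.le,
    show ((holderNorm α K u).toNNReal : ℝ≥0∞) = ENNReal.ofReal (holderNorm α K u) from rfl,
    ← ENNReal.ofReal_mul (holderNorm_nonneg α K u), dist_eq_norm]
  exact ENNReal.ofReal_le_ofReal (hu.norm_sub_le hα ha hb)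

lemma HolderBdd.continuousOn (hα : 0 < α) (hu : HolderBdd α K u) : ContinuousOn u K :=
  (hu.holderOnWith hα).continuousOn (Real.toNNReal_pos.2 hα)

end Holder

namespace IsMollifier

variable {n : ℕ} {ρ : Eu n → ℝ} {ε : ℝ}

lemma continuous_mollify (hρ : IsMollifier ρ) (ε : ℝ) : Continuous (mollify ρ ε) :=
  continuous_const.mul (hρ.1.continuous.comp (continuous_const_smul ε⁻¹))

lemma mollify_nonneg (hρ : IsMollifier ρ) (hε : 0 ≤ ε) (z : Eu n) : 0 ≤ mollify ρ ε z :=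
  mul_nonneg (inv_nonneg.2 (pow_nonneg hε n)) (hρ.2.2.1 _)

lemma support_mollify_sub_subset (hρ : IsMollifier ρ) (hε : 0 < ε) (x : Eu n) :
    support (fun y => mollify ρ ε (x - y)) ⊆ closedBall x ε := by
  intro y hy
  have hρxy : ε⁻¹ • (x - y) ∈ ball (0 : Eu n) 1 := hρ.2.2.2.1 (right_ne_zero_of_mul hy)
  rw [mem_ball_zero_iff, norm_smul, Real.norm_eq_abs, abs_of_pos (inv_pos.2 hε),
    inv_mul_lt_iff₀ hε, mul_one, ← dist_eq_norm] at hρxy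
  exact mem_closedBall'.2 hρxy.le

lemma integral_mollify (hρ : IsMollifier ρ) (hε : 0 < ε) : ∫ z, mollify ρ ε z = 1 := by
  simp only [mollify]
  rw [integral_const_mul, Measure.integral_comp_inv_smul_of_nonneg volume ρ hε.le,
    finrank_euclideanSpace_fin, hρ.2.2.2.2.2, smul_eq_mul, mul_one,
    inv_mul_cancel₀ (pow_pos hε n).ne']

lemma integral_mollify_sub (hρ : IsMollifier ρ) (hε : 0 < ε) (x : Eu n) :
    ∫ y, mollify ρ ε (x - y) = 1 :=
  (integral_sub_left_eq_self (mollify ρ ε) volume x).trans (hρ.integral_mollify hε)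

end IsMollifier

section WeightedAverage

variable {X : Type*} [MeasurableSpace X] {μ : Measure X} {K : Set X} {g : X → ℝ}

lemma norm_sub_integral_smul_le {E : Type*} [NormedAddCommGroup E] [NormedSpace ℝ E]
    [CompleteSpace E] (hgK : support g ⊆ K) (hg0 : ∀ y, 0 ≤ g y) (hg1 : ∫ y, g y ∂μ = 1)
    (hgi : Integrable g μ) {f : X → E} (hgf : Integrable (fun z => g z • f z) μ) {B : ℝ}
    (hB : ∀ y ∈ K, ∀ z ∈ K, ‖f y - f z‖ ≤ B) {y : X} (hy : y ∈ K) :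
    ‖f y - ∫ z, g z • f z ∂μ‖ ≤ B := by
  have hmean : f y - ∫ z, g z • f z ∂μ = ∫ z, g z • (f y - f z) ∂μ := by
    simp_rw [smul_sub]
    rw [integral_sub (hgi.smul_const (f y)) hgf, integral_smul_const, hg1, one_smul]
  have hpt : ∀ z, ‖g z • (f y - f z)‖ ≤ g z * B := by
    intro z
    by_cases hz : z ∈ K
    · rw [norm_smul, Real.norm_of_nonneg (hg0 z)]
      exact mul_le_mul_of_nonneg_left (hB y hy z hz) (hg0 z)
    · simp [notMem_support.1 (mt (@hgK z) hz)]
  calc ‖f y - ∫ z, g z • f z ∂μ‖ = ‖∫ z, g z • (f y - f z) ∂μ‖ := by rw [hmean]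
    _ ≤ ∫ z, g z * B ∂μ := norm_integral_le_of_norm_le (hgi.mul_const B) (ae_of_all _ hpt)
    _ = B := by rw [integral_mul_const, hg1, one_mul]

lemma abs_integral_mul_sub_mul_integral_le (hgK : support g ⊆ K) (hg0 : ∀ y, 0 ≤ g y)
    (hg1 : ∫ y, g y ∂μ = 1) (hgi : Integrable g μ) {a b : X → ℝ}
    (hga : Integrable (fun y => g y * a y) μ) (hgb : Integrable (fun y => g y * b y) μ)
    (hgab : Integrable (fun y => g y * (a y * b y)) μ) {s t : ℝ}
    (has : ∀ y ∈ K, |a y - ∫ z, g z * a z ∂μ| ≤ s)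
    (hbt : ∀ y ∈ K, |b y - ∫ z, g z * b z ∂μ| ≤ t) :
    |∫ y, g y * (a y * b y) ∂μ - (∫ y, g y * a y ∂μ) * ∫ y, g y * b y ∂μ| ≤ s * t := by
  set A := ∫ y, g y * a y ∂μ
  set B := ∫ y, g y * b y ∂μ
  have hcov : ∫ y, g y * (a y * b y) ∂μ - A * B = ∫ y, g y * ((a y - A) * (b y - B)) ∂μ := by
    have hexpand : ∀ y, g y * ((a y - A) * (b y - B)) =
        g y * (a y * b y) - g y * a y * B - A * (g y * b y) + A * B * g y := fun y => by ring
    have h₁ : Integrable (fun y => g y * (a y * b y) - g y * a y * B) μ :=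
      hgab.sub (hga.mul_const B)
    have h₂ : Integrable (fun y => g y * (a y * b y) - g y * a y * B - A * (g y * b y)) μ :=
      h₁.sub (hgb.const_mul A)
    simp_rw [hexpand]
    rw [integral_add h₂ (hgi.const_mul _), integral_sub h₁ (hgb.const_mul A),
      integral_sub hgab (hga.mul_const B), integral_mul_const, integral_const_mul,
      integral_const_mul, hg1]
    ring
  have hpt : ∀ y, ‖g y * ((a y - A) * (b y - B))‖ ≤ g y * (s * t) := by
    intro y
    by_cases hy : y ∈ K
    · rw [Real.norm_eq_abs, abs_mul, abs_mul, abs_of_nonneg (hg0 y)]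
      exact mul_le_mul_of_nonneg_left (mul_le_mul (has y hy) (hbt y hy) (abs_nonneg _)
        ((abs_nonneg _).trans (has y hy))) (hg0 y)
    · simp [notMem_support.1 (mt (@hgK y) hy)]
  rw [hcov, ← Real.norm_eq_abs]
  calc _ ≤ ∫ y, g y * (s * t) ∂μ :=
        norm_integral_le_of_norm_le (hgi.mul_const _) (ae_of_all _ hpt)
    _ = s * t := by rw [integral_mul_const, hg1, one_mul]

lemma integral_smul_smul_of_eq_one_on_support {E : Type*} [NormedAddCommGroup E]
    [NormedSpace ℝ E] {c : X → ℝ} (hc : ∀ y, g y ≠ 0 → c y = 1) (f : X → E) :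
    ∫ y, g y • c y • f y ∂μ = ∫ y, g y • f y ∂μ := by
  congr 1 with y
  rcases eq_or_ne (g y) 0 with hy | hy
  · simp [hy]
  · rw [hc y hy, one_smul]

variable [TopologicalSpace X] [T2Space X] [OpensMeasurableSpace X] [IsFiniteMeasureOnCompacts μ]

lemma integrable_smul_of_continuousOn {E : Type*} [NormedAddCommGroup E] [NormedSpace ℝ E]
    (hK : IsCompact K) (hg : ContinuousOn g K) (hgK : support g ⊆ K) {f : X → E}
    (hf : ContinuousOn f K) : Integrable (fun y => g y • f y) μ :=
  (integrableOn_iff_integrable_of_support_subset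
    ((support_smul_subset_left _ _).trans hgK)).1 ((hg.smul hf).integrableOn_compact hK)

lemma norm_integral_smul_tensor_sub_le {n : ℕ} (hK : IsCompact K) (hg : ContinuousOn g K)
    (hgK : support g ⊆ K) (hg0 : ∀ y, 0 ≤ g y) (hg1 : ∫ y, g y ∂μ = 1) {f : X → Eu n}
    (hf : ContinuousOn f K) {B : ℝ} (hB : ∀ y ∈ K, ∀ z ∈ K, ‖f y - f z‖ ≤ B) :
    ‖(∫ y, g y • tensor (f y) (f y) ∂μ) - tensor (∫ y, g y • f y ∂μ) (∫ y, g y • f y ∂μ)‖ ≤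
      B ^ 2 := by
  have hgi : Integrable g μ := by
    simpa using
      integrable_smul_of_continuousOn (μ := μ) hK hg hgK (continuousOn_const (c := (1 : ℝ)))
  have hfi : ∀ i, ContinuousOn (fun y => f y i) K := fun i =>
    (EuclideanSpace.proj (𝕜 := ℝ) i).continuous.comp_continuousOn hf
  have hgfi : ∀ i, Integrable (fun y => g y * f y i) μ := fun i =>
    integrable_smul_of_continuousOn hK hg hgK (hfi i)
  have hgfij : ∀ i j, Integrable (fun y => g y * (f y i * f y j)) μ := fun i j =>
    integrable_smul_of_continuousOn hK hg hgK ((hfi i).mul (hfi j))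
  have hmean : ∀ i, (∫ y, g y • f y ∂μ) i = ∫ y, g y * f y i ∂μ := fun i =>
    eval_integral_piLp (fun i => by simpa using hgfi i) i
  have hsecond : ∀ i j, (∫ y, g y • tensor (f y) (f y) ∂μ) i j =
      ∫ y, g y * (f y i * f y j) ∂μ := by
    intro i j
    rw [eval_integral (fun i => Integrable.of_eval fun j => by simpa [tensor] using hgfij i j),
      eval_integral (fun j => by simpa [tensor] using hgfij i j)]
    simp [tensor]
  have hdev : ∀ i, ∀ y ∈ K, |f y i - ∫ z, g z * f z i ∂μ| ≤ B := fun i y hy => by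
    rw [← hmean i, ← PiLp.sub_apply, ← Real.norm_eq_abs]
    exact (PiLp.norm_apply_le _ i).trans (norm_sub_integral_smul_le hgK hg0 hg1 hgi
      (integrable_smul_of_continuousOn hK hg hgK hf) hB hy)
  refine (pi_norm_le_iff_of_nonneg (sq_nonneg B)).2 fun i =>
    (pi_norm_le_iff_of_nonneg (sq_nonneg B)).2 fun j => ?_
  rw [Pi.sub_apply, Pi.sub_apply, hsecond i j, Real.norm_eq_abs, tensor, hmean i, hmean j, sq]
  exact abs_integral_mul_sub_mul_integral_le hgK hg0 hg1 hgi (hgfi i) (hgfi j) (hgfij i j)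
    (hdev i) (hdev j)

end WeightedAverage

theorem mollified_tensor_sup_estimate_general
    {n : ℕ} (ρ : Eu n → ℝ) (hρ : IsMollifier ρ)
    {α : ℝ} (hα0 : 0 < α)
    {Ω' Ω₁ Ω₂ Ω₃ : Set (Eu n)}
    (h₂₁ : closure Ω₂ ⊆ Ω₁) (h₁' : closure Ω₁ ⊆ Ω')
    {η : ℝ}
    (hsep₃₂ : ∀ x ∈ Ω₃, ∀ y ∉ Ω₂, η < dist x y)
    (I₂ : Eu n → ℝ)
    (hI₂one : ∀ x ∈ Ω₂, I₂ x = 1) :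
    ∃ C : ℝ, 0 < C ∧
      ∀ u : Eu n → Eu n, HolderBdd α (closure Ω') u →
      ∀ ε : ℝ, 0 < ε → ε < η / 2 →
      ∀ x ∈ Ω₃,
        ‖convM ρ ε (fun y => I₂ y • tensor (u y) (u y)) x
            - tensor (convV ρ ε (fun z => I₂ z • u z) x)
                (convV ρ ε (fun z => I₂ z • u z) x)‖ ≤
          C * ε ^ (2 * α) * holderNorm α (closure Ω') u ^ 2 := by
  refine ⟨2 ^ (2 * α), by positivity, fun u hu ε hε hεη x hx => ?_⟩
  set M := holderNorm α (closure Ω') u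
  set g : Eu n → ℝ := fun y => mollify ρ ε (x - y)
  have hball : closedBall x ε ⊆ Ω₂ := fun y hy => by
    by_contra hy₂
    linarith [hsep₃₂ x hx y hy₂, mem_closedBall'.1 hy]
  have hballΩ' : closedBall x ε ⊆ closure Ω' := hball.trans fun y hy =>
    subset_closure (h₁' (subset_closure (h₂₁ (subset_closure hy))))
  have hgK := hρ.support_mollify_sub_subset hε x
  have hcut : ∀ y, g y ≠ 0 → I₂ y = 1 := fun y hy => hI₂one y (hball (hgK hy))
  have hconvV : convV ρ ε (fun z => I₂ z • u z) x = ∫ y, g y • u y :=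
    integral_smul_smul_of_eq_one_on_support hcut u
  have hconvM : convM ρ ε (fun y => I₂ y • tensor (u y) (u y)) x =
      ∫ y, g y • tensor (u y) (u y) :=
    integral_smul_smul_of_eq_one_on_support hcut _
  calc _ ≤ (M * (2 * ε) ^ α) ^ 2 := by
        rw [hconvV, hconvM]
        exact norm_integral_smul_tensor_sub_le (isCompact_closedBall x ε)
          ((hρ.continuous_mollify ε).comp (continuous_const.sub continuous_id)).continuousOn
          hgK (fun y => hρ.mollify_nonneg hε.le _) (hρ.integral_mollify_sub hε x)
          ((hu.continuousOn hα0).mono hballΩ')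
          fun y hy z hz => hu.norm_sub_le_of_mem_closedBall hα0 hballΩ' hy hz
    _ = 2 ^ (2 * α) * ε ^ (2 * α) * M ^ 2 := by
        rw [mul_pow, ← Real.rpow_mul_natCast (by positivity), Real.mul_rpow zero_le_two hε.le]
        push_cast
        ring_nf

/-- estimate (3.39): for `0 < ε < η/2`,
`sup_{x ∈ Ω₃} |ρ_ε⋆(I₂·(u⊗u))(x) − (ρ_ε⋆ū)(x)⊗(ρ_ε⋆ū)(x)| ≤ C ε^{2α} ‖u‖²_{C^{0,α}}`. -/
theorem mollified_tensor_sup_estimate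
    {n : ℕ} (ρ : Eu n → ℝ) (hρ : IsMollifier ρ)
    {α : ℝ} (hα0 : 0 < α) (hα1 : α ≤ 1)
    {Ω' Ω₁ Ω₂ Ω₃ : Set (Eu n)} (hΩ'o : IsOpen Ω') (hΩ'b : Bornology.IsBounded Ω')
    (hΩ₁o : IsOpen Ω₁) (hΩ₂o : IsOpen Ω₂) (hΩ₃o : IsOpen Ω₃)
    (h₃₂ : closure Ω₃ ⊆ Ω₂) (h₂₁ : closure Ω₂ ⊆ Ω₁) (h₁' : closure Ω₁ ⊆ Ω')
    {η : ℝ} (hη : 0 < η)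
    (hsep₃₂ : ∀ x ∈ Ω₃, ∀ y ∉ Ω₂, η < dist x y)
    (hsep₂₁ : ∀ x ∈ Ω₂, ∀ y ∉ Ω₁, η < dist x y)
    (hsep₁' : ∀ x ∈ Ω₁, ∀ y ∉ Ω', η < dist x y)
    (I₂ : Eu n → ℝ) (hI₂sm : ContDiff ℝ (⊤ : ℕ∞) I₂) (hI₂cs : HasCompactSupport I₂)
    (hI₂one : ∀ x ∈ Ω₂, I₂ x = 1) (hI₂zero : ∀ x ∉ Ω₁, I₂ x = 0) :
    ∃ C : ℝ, 0 < C ∧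
      ∀ u : Eu n → Eu n, HolderBdd α (closure Ω') u →
      ∀ ε : ℝ, 0 < ε → ε < η / 2 →
      ∀ x ∈ Ω₃,
        ‖convM ρ ε (fun y => I₂ y • tensor (u y) (u y)) x
            - tensor (convV ρ ε (fun z => I₂ z • u z) x)
                (convV ρ ε (fun z => I₂ z • u z) x)‖ ≤
          C * ε ^ (2 * α) * holderNorm α (closure Ω') u ^ 2 :=
  mollified_tensor_sup_estimate_general ρ hρ hα0 h₂₁ h₁' hsep₃₂ I₂ hI₂one
end
end
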